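/- arXiv:1410.6774 — 4 statements merged into one kernel-verified Lean document; each statement's English description precedes it below -/
import Mathlib

section
/- Every n-dimensional normed space M over ℂ (n ≥ 1) admits an Auerbach basis: there exist vectors e_1, …, e_n forming a basis of M such that for all scalars λ_1, …, λ_n ∈ ℂ one has max_i |λ_i| ≤ ‖∑_{i=1}^n λ_i e_i‖ ≤ ∑_{i=1}^n |λ_i|. -/
/-!
Among all `n`-tuples `v` of vectors in the closed unit ball, choose one maximizing `‖det v‖`
(the determinant with respect to any fixed basis; it exists by compactness and is nonzero).
By Cramer's rule the `i`-th coordinate of `x` in the basis `v` is `det (v[i ↦ x]) / det v`,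
and for `‖x‖ ≤ 1` the tuple `v[i ↦ x]` is a competitor, so every coordinate functional has
norm at most one.
-/

open Module Set Metric

namespace Module.Basis

section

variable {𝕜 E ι : Type*} [NontriviallyNormedField 𝕜] [CompleteSpace 𝕜]
  [NormedAddCommGroup E] [NormedSpace 𝕜 E] [FiniteDimensional 𝕜 E] [Fintype ι] [DecidableEq ι]

theorem continuous_det (b : Basis ι 𝕜 E) : Continuous fun v : ι → E => b.det v := by
  simp_rw [Basis.det_apply]
  exact (continuous_matrix fun i j =>
    (b.coord i).continuous_of_finiteDimensional.comp (continuous_apply j)).matrix_det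

end

variable {𝕜 E ι : Type*} [RCLike 𝕜] [NormedAddCommGroup E] [NormedSpace 𝕜 E] [Fintype ι]

/-- Equivalently `‖e i‖ = 1`, since `e.coord i (e i) = 1`. -/
def IsAuerbach (e : Basis ι 𝕜 E) : Prop :=
  (∀ i, ‖e i‖ ≤ 1) ∧ ∀ i x, ‖e.coord i x‖ ≤ ‖x‖

namespace IsAuerbach

variable {e : Basis ι 𝕜 E}

theorem norm_le_norm_sum (he : e.IsAuerbach) (c : ι → 𝕜) (i : ι) :
    ‖c i‖ ≤ ‖∑ j, c j • e j‖ := by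
  have := he.2 i (∑ j, c j • e j)
  rwa [e.coord_apply, e.repr_sum_self] at this

theorem norm_sum_le (he : e.IsAuerbach) (c : ι → 𝕜) : ‖∑ i, c i • e i‖ ≤ ∑ i, ‖c i‖ :=
  calc ‖∑ i, c i • e i‖ ≤ ∑ i, ‖c i‖ * ‖e i‖ := norm_sum_le_of_le _ fun _ _ => norm_smul_le _ _
    _ ≤ ∑ i, ‖c i‖ := Finset.sum_le_sum fun i _ =>
        mul_le_of_le_one_right (norm_nonneg _) (he.1 i)

end IsAuerbach

variable [FiniteDimensional 𝕜 E] [DecidableEq ι]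

theorem exists_isMaxOn_norm_det (b : Basis ι 𝕜 E) :
    ∃ v ∈ univ.pi fun _ => closedBall (0 : E) 1,
      IsMaxOn (‖b.det ·‖) (univ.pi fun _ => closedBall (0 : E) 1) v ∧ b.det v ≠ 0 := by
  let v₀ : ι → E := fun i => (‖b i‖⁻¹ : 𝕜) • b i
  have hv₀ : v₀ ∈ univ.pi fun _ => closedBall (0 : E) 1 := fun i _ => by
    simp [v₀, norm_smul_inv_norm (b.ne_zero i)]
  have hdet₀ : b.det v₀ ≠ 0 := by
    simp [v₀, AlternatingMap.map_smul_univ, Finset.prod_ne_zero_iff, b.ne_zero, b.det_ne_zero]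
  have := FiniteDimensional.proper_rclike 𝕜 E
  obtain ⟨v, hv, hmax⟩ := (isCompact_univ_pi fun _ => isCompact_closedBall (0 : E) 1).exists_isMaxOn
    ⟨v₀, hv₀⟩ b.continuous_det.norm.continuousOn
  exact ⟨v, hv, hmax, norm_pos_iff.mp ((norm_pos_iff.mpr hdet₀).trans_le (hmax hv₀))⟩

theorem norm_coord_mk_le_of_isMaxOn_det (b : Basis ι 𝕜 E) {v : ι → E}
    (hli : LinearIndependent 𝕜 v) (hsp : ⊤ ≤ Submodule.span 𝕜 (range v))
    (hv : v ∈ univ.pi fun _ => closedBall (0 : E) 1)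
    (hmax : IsMaxOn (‖b.det ·‖) (univ.pi fun _ => closedBall (0 : E) 1) v) (i : ι) (x : E) :
    ‖(Basis.mk hli hsp).coord i x‖ ≤ ‖x‖ := by
  have hdet : 0 < ‖b.det v‖ :=
    norm_pos_iff.mpr (isUnit_iff_ne_zero.mp (b.is_basis_iff_det.mp ⟨hli, top_le_iff.mp hsp⟩))
  have hcramer (y : E) :
      b.det v * (Basis.mk hli hsp).coord i y = b.det (Function.update v i y) :=
    congr($(b.det_smul_mk_coord_eq_det_update hli hsp i) y)
  have hcoord : ‖((Basis.mk hli hsp).coord i).toContinuousLinearMap‖ ≤ 1 := by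
    refine ContinuousLinearMap.opNorm_le_of_unit_norm zero_le_one fun y hy => ?_
    have hupdate : Function.update v i y ∈ univ.pi fun _ => closedBall (0 : E) 1 := fun j _ => by
      rcases eq_or_ne j i with rfl | hji
      · simp [hy]
      · simpa [hji] using hv j (mem_univ j)
    refine le_of_mul_le_mul_left ?_ hdet
    rw [← norm_mul, LinearMap.coe_toContinuousLinearMap', hcramer, mul_one]
    exact hmax hupdate
  simpa using ((Basis.mk hli hsp).coord i).toContinuousLinearMap.le_of_opNorm_le hcoord x

theorem exists_isAuerbach (b : Basis ι 𝕜 E) : ∃ e : Basis ι 𝕜 E, e.IsAuerbach := by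
  obtain ⟨v, hv, hmax, hdet⟩ := b.exists_isMaxOn_norm_det
  obtain ⟨hli, hsp⟩ := b.is_basis_iff_det.mpr (isUnit_iff_ne_zero.mpr hdet)
  refine ⟨Basis.mk hli hsp.ge, fun i => ?_, b.norm_coord_mk_le_of_isMaxOn_det hli hsp.ge hv hmax⟩
  simpa using hv i (mem_univ i)

end Module.Basis

theorem auerbach_basis_exists_general (M : Type*) [NormedAddCommGroup M] [NormedSpace ℂ M]
    [FiniteDimensional ℂ M] (n : ℕ) (hdim : Module.finrank ℂ M = n) :
    ∃ e : Module.Basis (Fin n) ℂ M, ∀ c : Fin n → ℂ,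
      (∀ i, ‖c i‖ ≤ ‖∑ i, c i • e i‖) ∧ ‖∑ i, c i • e i‖ ≤ ∑ i, ‖c i‖ := by
  obtain ⟨e, he⟩ := (Module.finBasisOfFinrankEq ℂ M hdim).exists_isAuerbach
  exact ⟨e, fun c => ⟨he.norm_le_norm_sum c, he.norm_sum_le c⟩⟩

/-- Every `n`-dimensional normed space `M` over `ℂ` (`n ≥ 1`) admits an Auerbach basis:
a basis `e : Fin n → M` such that for all scalars `c : Fin n → ℂ`,
`max_i ‖c i‖ ≤ ‖∑ i, c i • e i‖ ≤ ∑ i, ‖c i‖`. -/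
theorem auerbach_basis_exists (M : Type*) [NormedAddCommGroup M] [NormedSpace ℂ M]
    [FiniteDimensional ℂ M] (n : ℕ) (hn : 1 ≤ n) (hdim : Module.finrank ℂ M = n) :
    ∃ e : Module.Basis (Fin n) ℂ M, ∀ c : Fin n → ℂ,
      (∀ i, ‖c i‖ ≤ ‖∑ i, c i • e i‖) ∧ ‖∑ i, c i • e i‖ ≤ ∑ i, ‖c i‖ :=
  auerbach_basis_exists_general M n hdim
end

section
/- Let E be a normed space over ℂ, let M ⊆ E be an n-dimensional subspace with an Auerbach basis (e_1, …, e_n). Let T : E → E be a continuous linear map and μ ≥ 0 with ‖T e_i − e_i‖ ≤ μ for all i, and assume nμ < 1. Then the restriction T|_M : M → T(M) is a linear bijection onto T(M), and its inverse V : T(M) → M satisfies ‖V y‖ ≤ (1/(1 − nμ)) ‖y‖ for all y ∈ T(M). -/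
/-!
Write `x ∈ M` as `∑ cᵢ eᵢ`. The lower Auerbach bound `|cᵢ| ≤ ‖x‖` gives
`‖T x - x‖ = ‖∑ cᵢ (T eᵢ - eᵢ)‖ ≤ n μ ‖x‖`, hence `(1 - n μ) ‖x‖ ≤ ‖T x‖` on `M`.
Since `1 - n μ > 0`, this lower bound makes `T` injective on `M` and is the bound on the inverse.
-/

section

variable {𝕜 E : Type*} [NormedField 𝕜]

theorem norm_map_sum_sub_sum_le [SeminormedAddCommGroup E] [NormedSpace 𝕜 E]
    {ι : Type*} [Fintype ι] (T : E →ₗ[𝕜] E) {e : ι → E} {μ : ℝ}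
    (hTe : ∀ i, ‖T (e i) - e i‖ ≤ μ) {c : ι → 𝕜} (hc : ∀ i, ‖c i‖ ≤ ‖∑ i, c i • e i‖) :
    ‖T (∑ i, c i • e i) - ∑ i, c i • e i‖ ≤ Fintype.card ι * μ * ‖∑ i, c i • e i‖ := by
  set x := ∑ i, c i • e i
  have hsum : T x - x = ∑ i, c i • (T (e i) - e i) := by
    simp only [x, map_sum, map_smul, smul_sub, Finset.sum_sub_distrib]
  calc ‖T x - x‖ ≤ ∑ i, ‖c i‖ * ‖T (e i) - e i‖ := by
        rw [hsum]
        exact (norm_sum_le _ _).trans_eq (by simp only [norm_smul])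
    _ ≤ ∑ _i : ι, ‖x‖ * μ := by
        gcongr with i
        exacts [hc i, hTe i]
    _ = Fintype.card ι * μ * ‖x‖ := by
        rw [Finset.sum_const, Finset.card_univ, nsmul_eq_mul]
        ring

theorem mul_norm_le_norm_of_norm_sub_le [SeminormedAddCommGroup E] {x y : E} {δ : ℝ}
    (h : ‖y - x‖ ≤ δ * ‖x‖) : (1 - δ) * ‖x‖ ≤ ‖y‖ := by
  have := norm_sub_norm_le x y
  rw [norm_sub_rev] at this
  linarith

theorem LinearMap.injOn_of_mul_norm_le [NormedAddCommGroup E] [Module 𝕜 E]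
    {F : Type*} [SeminormedAddCommGroup F] [Module 𝕜 F] (T : E →ₗ[𝕜] F)
    {M : Submodule 𝕜 E} {C : ℝ} (hC : 0 < C) (h : ∀ x ∈ M, C * ‖x‖ ≤ ‖T x‖) :
    Set.InjOn T M := by
  intro x hx y hy hxy
  have hzero : C * ‖x - y‖ ≤ 0 := by
    simpa [map_sub, hxy] using h (x - y) (M.sub_mem hx hy)
  have : ‖x - y‖ ≤ 0 := nonpos_of_mul_nonpos_right hzero hC
  exact sub_eq_zero.mp (norm_le_zero_iff.mp this)

end

theorem restriction_invertible_of_perturb_auerbach_general (E : Type*) [NormedAddCommGroup E]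
    [NormedSpace ℂ E] (n : ℕ) (M : Submodule ℂ E) (e : Fin n → E)
    (hspan : M = Submodule.span ℂ (Set.range e))
    (hAuer : ∀ c : Fin n → ℂ,
      (∀ i, ‖c i‖ ≤ ‖∑ i, c i • e i‖) ∧ ‖∑ i, c i • e i‖ ≤ ∑ i, ‖c i‖)
    (T : E →L[ℂ] E) (μ : ℝ)
    (hTe : ∀ i, ‖T (e i) - e i‖ ≤ μ) (hμn : (n : ℝ) * μ < 1) :
    Set.BijOn (T : E → E) (M : Set E) ((T : E → E) '' (M : Set E)) ∧
      ∀ x ∈ M, ‖x‖ ≤ (1 / (1 - n * μ)) * ‖T x‖ := by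
  have hpos : 0 < 1 - (n : ℝ) * μ := by linarith
  have hlower : ∀ x ∈ M, (1 - n * μ) * ‖x‖ ≤ ‖T x‖ := by
    intro x hx
    rw [hspan] at hx
    obtain ⟨c, rfl⟩ := (Submodule.mem_span_range_iff_exists_fun ℂ).mp hx
    apply mul_norm_le_norm_of_norm_sub_le
    simpa using norm_map_sum_sub_sum_le (T : E →ₗ[ℂ] E) hTe (hAuer c).1
  refine ⟨(LinearMap.injOn_of_mul_norm_le (T : E →ₗ[ℂ] E) hpos hlower).bijOn_image, ?_⟩
  intro x hx
  rw [one_div_mul_eq_div, le_div_iff₀ hpos, mul_comm]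
  exact hlower x hx

/-- If `M ⊆ E` is an `n`-dimensional subspace with an Auerbach basis `e₁, …, eₙ`,
`T : E → E` is bounded linear, `μ ≥ 0` satisfies `‖T eᵢ - eᵢ‖ ≤ μ` for all `i` and
`n μ < 1`, then `T` restricted to `M` is a bijection onto `T(M)` and its inverse
`V : T(M) → M` satisfies `‖V y‖ ≤ (1/(1 - n μ)) ‖y‖` for all `y ∈ T(M)`
(equivalently `‖x‖ ≤ (1/(1 - n μ)) ‖T x‖` for all `x ∈ M`). -/
theorem restriction_invertible_of_perturb_auerbach (E : Type*) [NormedAddCommGroup E]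
    [NormedSpace ℂ E] (n : ℕ) (M : Submodule ℂ E) (e : Fin n → E)
    (he : ∀ i, e i ∈ M)
    (hspan : M = Submodule.span ℂ (Set.range e))
    (hAuer : ∀ c : Fin n → ℂ,
      (∀ i, ‖c i‖ ≤ ‖∑ i, c i • e i‖) ∧ ‖∑ i, c i • e i‖ ≤ ∑ i, ‖c i‖)
    (T : E →L[ℂ] E) (μ : ℝ) (hμ : 0 ≤ μ)
    (hTe : ∀ i, ‖T (e i) - e i‖ ≤ μ) (hμn : (n : ℝ) * μ < 1) :
    Set.BijOn (T : E → E) (M : Set E) ((T : E → E) '' (M : Set E)) ∧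
      ∀ x ∈ M, ‖x‖ ≤ (1 / (1 - n * μ)) * ‖T x‖ :=
  restriction_invertible_of_perturb_auerbach_general E n M e hspan hAuer T μ hTe hμn
end

section
/- Let E be a normed space over ℂ, let M ⊆ E be an n-dimensional subspace with an Auerbach basis (e_1, …, e_n). Let T : E → E be a continuous linear map and μ ≥ 0 with ‖T e_i − e_i‖ ≤ μ for all i, and assume nμ < 1. Then for every x ∈ M one has ‖x − T x‖ ≤ (nμ/(1 − nμ)) ‖T x‖. Equivalently, writing V : T(M) → M for the inverse of T|_M and J : T(M) → E for the inclusion, the operator V − J : T(M) → E has norm at most nμ/(1 − nμ). -/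
/-! Writing `x = ∑ cᵢ eᵢ`, the lower Auerbach bound gives `|cᵢ| ≤ ‖x‖`, so
`‖x - T x‖ ≤ ∑ |cᵢ| ‖eᵢ - T eᵢ‖ ≤ n μ ‖x‖`; since `‖x‖ ≤ ‖T x‖ + ‖x - T x‖`, this
rearranges to `(1 - n μ) ‖x - T x‖ ≤ n μ ‖T x‖`. -/

theorem norm_sub_le_div_one_sub_mul_of_norm_sub_le_mul {E : Type*} [SeminormedAddGroup E]
    {x y : E} {δ : ℝ} (hδ : 0 ≤ δ) (hδ₁ : δ < 1) (h : ‖x - y‖ ≤ δ * ‖x‖) :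
    ‖x - y‖ ≤ δ / (1 - δ) * ‖y‖ := by
  have hx : ‖x‖ ≤ ‖y‖ + ‖x - y‖ := norm_le_insert' x y
  rw [div_mul_eq_mul_div, le_div_iff₀ (by linarith)]
  nlinarith [mul_le_mul_of_nonneg_left hx hδ]

theorem norm_sub_apply_le_of_norm_coeff_le {𝕜 E ι : Type*} [NormedField 𝕜]
    [SeminormedAddCommGroup E] [NormedSpace 𝕜 E] [Fintype ι] (T : E →ₗ[𝕜] E) {e : ι → E}
    {μ : ℝ} (hTe : ∀ i, ‖T (e i) - e i‖ ≤ μ) {c : ι → 𝕜} {x : E}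
    (hx : ∑ i, c i • e i = x) (hc : ∀ i, ‖c i‖ ≤ ‖x‖) :
    ‖x - T x‖ ≤ Fintype.card ι * μ * ‖x‖ := by
  have hsum : x - T x = ∑ i, c i • (e i - T (e i)) := by
    simp only [smul_sub, Finset.sum_sub_distrib, ← map_smul, ← map_sum, hx]
  calc ‖x - T x‖ ≤ ∑ i, ‖c i‖ * ‖e i - T (e i)‖ := by
        rw [hsum]
        exact (norm_sum_le _ _).trans_eq (by simp only [norm_smul])
    _ ≤ ∑ _i : ι, ‖x‖ * μ := by
        gcongr with i
        · exact hc i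
        · rw [norm_sub_rev]; exact hTe i
    _ = Fintype.card ι * μ * ‖x‖ := by
        rw [Finset.sum_const, Finset.card_univ, nsmul_eq_mul]; ring

theorem norm_sub_apply_le_of_perturb_auerbach_general (E : Type*) [NormedAddCommGroup E]
    [NormedSpace ℂ E] (n : ℕ) (M : Submodule ℂ E) (e : Fin n → E)
    (hspan : M = Submodule.span ℂ (Set.range e))
    (hAuer : ∀ c : Fin n → ℂ,
      (∀ i, ‖c i‖ ≤ ‖∑ i, c i • e i‖) ∧ ‖∑ i, c i • e i‖ ≤ ∑ i, ‖c i‖)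
    (T : E →L[ℂ] E) (μ : ℝ) (hμ : 0 ≤ μ)
    (hTe : ∀ i, ‖T (e i) - e i‖ ≤ μ) (hμn : (n : ℝ) * μ < 1) :
    ∀ x ∈ M, ‖x - T x‖ ≤ (n * μ / (1 - n * μ)) * ‖T x‖ := by
  intro x hx
  rw [hspan, Submodule.mem_span_range_iff_exists_fun] at hx
  obtain ⟨c, rfl⟩ := hx
  have hsmall := norm_sub_apply_le_of_norm_coeff_le (T : E →ₗ[ℂ] E) hTe rfl (hAuer c).1
  rw [Fintype.card_fin] at hsmall
  exact norm_sub_le_div_one_sub_mul_of_norm_sub_le_mul (by positivity) hμn hsmall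

/-- If `M ⊆ E` is an `n`-dimensional subspace with an Auerbach basis `e₁, …, eₙ`,
`T : E → E` is bounded linear, `μ ≥ 0` satisfies `‖T eᵢ - eᵢ‖ ≤ μ` for all `i` and
`n μ < 1`, then for every `x ∈ M` one has `‖x - T x‖ ≤ (n μ/(1 - n μ)) ‖T x‖`;
i.e. the operator `V - J : T(M) → E` has norm at most `n μ/(1 - n μ)`. -/
theorem norm_sub_apply_le_of_perturb_auerbach (E : Type*) [NormedAddCommGroup E]
    [NormedSpace ℂ E] (n : ℕ) (M : Submodule ℂ E) (e : Fin n → E)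
    (he : ∀ i, e i ∈ M)
    (hspan : M = Submodule.span ℂ (Set.range e))
    (hAuer : ∀ c : Fin n → ℂ,
      (∀ i, ‖c i‖ ≤ ‖∑ i, c i • e i‖) ∧ ‖∑ i, c i • e i‖ ≤ ∑ i, ‖c i‖)
    (T : E →L[ℂ] E) (μ : ℝ) (hμ : 0 ≤ μ)
    (hTe : ∀ i, ‖T (e i) - e i‖ ≤ μ) (hμn : (n : ℝ) * μ < 1) :
    ∀ x ∈ M, ‖x - T x‖ ≤ (n * μ / (1 - n * μ)) * ‖T x‖ :=
  norm_sub_apply_le_of_perturb_auerbach_general E n M e hspan hAuer T μ hμ hTe hμn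
end

section
/- Let E be a normed space over ℂ, let M ⊆ E be an n-dimensional subspace with an Auerbach basis (e_1, …, e_n). Let T : E → E be a continuous linear map of finite rank and μ ≥ 0 with ‖T e_i − e_i‖ ≤ μ for all i and nμ < 1, so that T|_M : M → T(M) is invertible with inverse V. Let P : E → E be a projection onto T(M) with ‖P‖ ≤ n, and define Q : E → E by Q e = e − P e + V(P e). Then Q is a bounded linear operator with ‖Q‖ ≤ 1 + n²μ/(1 − nμ), the operator F = Q ∘ T satisfies F x = x for every x ∈ M, and rank F ≤ rank T; in particular ‖F‖ ≤ (1 + n²μ/(1 − nμ)) ‖T‖. -/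
/-!
On `M` the operator `T` is an `nμ`-perturbation of the identity: writing `x = ∑ cᵢ eᵢ`, the
Auerbach property bounds every `|cᵢ|` by `‖x‖`, so `‖T x - x‖ ≤ ∑ |cᵢ| μ ≤ nμ ‖x‖`. Hence
`‖x‖ ≤ ‖T x‖/(1 - nμ)`, i.e. `‖z - V z‖ ≤ nμ/(1 - nμ) ‖z‖` on `T(M)`, and since `P` maps
into `T(M)` with `‖P‖ ≤ n`, `Q = 1 + (V - 1) P` has norm at most
`1 + n · nμ/(1 - nμ)`. On `T(M)` the projection `P` is the identity, so `Q T x = V T x = x` for `x ∈ M`.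
-/

open Submodule

theorem norm_apply_sub_self_le_of_mem_span {𝕜 E ι : Type*} [NormedField 𝕜]
    [SeminormedAddCommGroup E] [NormedSpace 𝕜 E] [Fintype ι] {e : ι → E}
    (he : ∀ c : ι → 𝕜, ∀ i, ‖c i‖ ≤ ‖∑ i, c i • e i‖) (T : E →ₗ[𝕜] E) {μ : ℝ}
    (hTe : ∀ i, ‖T (e i) - e i‖ ≤ μ) {x : E} (hx : x ∈ span 𝕜 (Set.range e)) :
    ‖T x - x‖ ≤ Fintype.card ι * μ * ‖x‖ := by
  obtain ⟨c, rfl⟩ := (mem_span_range_iff_exists_fun 𝕜).mp hx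
  have hsum : T (∑ i, c i • e i) - ∑ i, c i • e i = ∑ i, c i • (T (e i) - e i) := by
    simp only [map_sum, map_smul, smul_sub, Finset.sum_sub_distrib]
  calc ‖T (∑ i, c i • e i) - ∑ i, c i • e i‖
      ≤ ∑ i, ‖c i‖ * ‖T (e i) - e i‖ := by
        rw [hsum]; exact (norm_sum_le _ _).trans_eq (by simp only [norm_smul])
    _ ≤ ∑ _i : ι, ‖∑ i, c i • e i‖ * μ :=
        Finset.sum_le_sum fun i _ ↦ mul_le_mul (he c i) (hTe i) (norm_nonneg _) (norm_nonneg _)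
    _ = Fintype.card ι * μ * ‖∑ i, c i • e i‖ := by
        rw [Finset.sum_const, Finset.card_univ, nsmul_eq_mul]; ring

theorem norm_sub_le_div_one_sub_mul {E : Type*} [SeminormedAddCommGroup E] {x y : E} {δ : ℝ}
    (hδ₀ : 0 ≤ δ) (hδ₁ : δ < 1) (h : ‖y - x‖ ≤ δ * ‖x‖) :
    ‖y - x‖ ≤ δ / (1 - δ) * ‖y‖ := by
  have hx : ‖x‖ ≤ ‖y‖ + ‖y - x‖ := by simpa using norm_sub_le y (y - x)
  rw [div_mul_eq_mul_div, le_div_iff₀ (by linarith)]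
  nlinarith

theorem norm_sub_apply_add_apply_le {𝕜 E : Type*} [NontriviallyNormedField 𝕜]
    [SeminormedAddCommGroup E] [NormedSpace 𝕜 E] (P : E →L[𝕜] E) (V : E → E) {κ C : ℝ}
    (hκ : 0 ≤ κ) (hV : ∀ y, ‖P y - V (P y)‖ ≤ κ * ‖P y‖) (hP : ‖P‖ ≤ C) (y : E) :
    ‖y - P y + V (P y)‖ ≤ (1 + C * κ) * ‖y‖ := by
  have hPy : ‖P y‖ ≤ C * ‖y‖ := P.le_of_opNorm_le hP y
  calc ‖y - P y + V (P y)‖ = ‖y - (P y - V (P y))‖ := by congr 1; abel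
    _ ≤ ‖y‖ + κ * ‖P y‖ := (norm_sub_le _ _).trans (by gcongr; exact hV y)
    _ ≤ ‖y‖ + κ * (C * ‖y‖) := by gcongr
    _ = (1 + C * κ) * ‖y‖ := by ring

theorem correction_operator_bounds_general (E : Type*) [NormedAddCommGroup E] [NormedSpace ℂ E]
    (n : ℕ) (M : Submodule ℂ E) (e : Fin n → E)
    (hspan : M = Submodule.span ℂ (Set.range e))
    (hAuer : ∀ c : Fin n → ℂ,
      (∀ i, ‖c i‖ ≤ ‖∑ i, c i • e i‖) ∧ ‖∑ i, c i • e i‖ ≤ ∑ i, ‖c i‖)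
    (T : E →L[ℂ] E)
    (μ : ℝ) (hμ : 0 ≤ μ)
    (hTe : ∀ i, ‖T (e i) - e i‖ ≤ μ) (hμn : (n : ℝ) * μ < 1)
    (V : E →ₗ[ℂ] E) (hV : ∀ x ∈ M, V (T x) = x)
    (P : E →L[ℂ] E)
    (hPrange : ∀ y : E, P y ∈ M.map (T : E →ₗ[ℂ] E))
    (hPid : ∀ y ∈ M.map (T : E →ₗ[ℂ] E), P y = y)
    (hPnorm : ‖P‖ ≤ (n : ℝ)) :
    (∀ y : E, ‖y - P y + V (P y)‖ ≤ (1 + (n : ℝ) ^ 2 * μ / (1 - n * μ)) * ‖y‖) ∧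
      (∀ x ∈ M, T x - P (T x) + V (P (T x)) = x) ∧
      Module.rank ℂ
          ↥(LinearMap.range
            ((LinearMap.id - (P : E →ₗ[ℂ] E) + V.comp (P : E →ₗ[ℂ] E)).comp
              (T : E →ₗ[ℂ] E))) ≤
        Module.rank ℂ ↥(LinearMap.range (T : E →ₗ[ℂ] E)) ∧
      (∀ y : E, ‖T y - P (T y) + V (P (T y))‖ ≤
        (1 + (n : ℝ) ^ 2 * μ / (1 - n * μ)) * ‖T‖ * ‖y‖) := by
  subst hspan
  have hnμ : 0 ≤ (n : ℝ) * μ := by positivity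
  have hV_near_id : ∀ y, ‖P y - V (P y)‖ ≤ n * μ / (1 - n * μ) * ‖P y‖ := by
    intro y
    obtain ⟨x, hx, hxy⟩ := hPrange y
    rw [← hxy, ContinuousLinearMap.coe_coe, hV x hx]
    refine norm_sub_le_div_one_sub_mul hnμ hμn ?_
    simpa using norm_apply_sub_self_le_of_mem_span (fun c ↦ (hAuer c).1) T hTe hx
  have hQ : ∀ y : E, ‖y - P y + V (P y)‖ ≤ (1 + (n : ℝ) ^ 2 * μ / (1 - n * μ)) * ‖y‖ := by
    intro y
    convert norm_sub_apply_add_apply_le P V (by positivity) hV_near_id hPnorm y using 2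
    ring
  refine ⟨hQ, fun x hx ↦ ?_, LinearMap.rank_comp_le_right _ _, fun y ↦ ?_⟩
  · have hPTx : P (T x) = T x := hPid _ ⟨x, hx, rfl⟩
    rw [hPTx, hV x hx, sub_self, zero_add]
  · rw [mul_assoc]
    exact (hQ (T y)).trans (by gcongr; exact T.le_opNorm y)

/-- Let `M ⊆ E` be an `n`-dimensional subspace with an Auerbach basis `e₁, …, eₙ`, let
`T : E → E` be a bounded finite-rank operator with `‖T eᵢ - eᵢ‖ ≤ μ` for all `i` and
`n μ < 1`, so that `T|_M` is invertible with inverse `V : T(M) → M`.  Let `P : E → E`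
be a projection onto `T(M)` with `‖P‖ ≤ n` and define `Q y = y - P y + V (P y)`.
Then `‖Q‖ ≤ 1 + n² μ/(1 - n μ)`, the operator `F = Q ∘ T` restricts to the identity on
`M`, `rank F ≤ rank T`, and `‖F‖ ≤ (1 + n² μ/(1 - n μ)) ‖T‖`. -/
theorem correction_operator_bounds (E : Type*) [NormedAddCommGroup E] [NormedSpace ℂ E]
    (n : ℕ) (M : Submodule ℂ E) (e : Fin n → E)
    (he : ∀ i, e i ∈ M)
    (hspan : M = Submodule.span ℂ (Set.range e))
    (hAuer : ∀ c : Fin n → ℂ,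
      (∀ i, ‖c i‖ ≤ ‖∑ i, c i • e i‖) ∧ ‖∑ i, c i • e i‖ ≤ ∑ i, ‖c i‖)
    (T : E →L[ℂ] E)
    (hT : FiniteDimensional ℂ ↥(LinearMap.range (T : E →ₗ[ℂ] E)))
    (μ : ℝ) (hμ : 0 ≤ μ)
    (hTe : ∀ i, ‖T (e i) - e i‖ ≤ μ) (hμn : (n : ℝ) * μ < 1)
    (V : E →ₗ[ℂ] E) (hV : ∀ x ∈ M, V (T x) = x)
    (P : E →L[ℂ] E)
    (hPrange : ∀ y : E, P y ∈ M.map (T : E →ₗ[ℂ] E))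
    (hPid : ∀ y ∈ M.map (T : E →ₗ[ℂ] E), P y = y)
    (hPnorm : ‖P‖ ≤ (n : ℝ)) :
    (∀ y : E, ‖y - P y + V (P y)‖ ≤ (1 + (n : ℝ) ^ 2 * μ / (1 - n * μ)) * ‖y‖) ∧
      (∀ x ∈ M, T x - P (T x) + V (P (T x)) = x) ∧
      Module.rank ℂ
          ↥(LinearMap.range
            ((LinearMap.id - (P : E →ₗ[ℂ] E) + V.comp (P : E →ₗ[ℂ] E)).comp
              (T : E →ₗ[ℂ] E))) ≤
        Module.rank ℂ ↥(LinearMap.range (T : E →ₗ[ℂ] E)) ∧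
      (∀ y : E, ‖T y - P (T y) + V (P (T y))‖ ≤
        (1 + (n : ℝ) ^ 2 * μ / (1 - n * μ)) * ‖T‖ * ‖y‖) :=
  correction_operator_bounds_general E n M e hspan hAuer T μ hμ hTe hμn V hV P hPrange hPid hPnorm
end
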